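/- Let s₂, s₃ > 0, set ω := min{s₂, s₃}, and assume |g|_{s₂} < ∞ and |u_d|_{s₃} < ∞. Let j be the reduced functional with data (g, u_d) and, for even n, let j_n be the reduced functional with truncated data (P_n g, P_n u_d). Assume there exists κ > 0 such that ∇²j(s,α) − κ·Id and ∇²j_n(s,α) − κ·Id are positive semidefinite for all (s,α) ∈ W° and all n, and let (s̄,ᾱ) ∈ W° and (s̄_n,ᾱ_n) ∈ W° be the (unique) minimizers of j and j_n over W°. Then there exists a constant C > 0, depending only on s₀, α₁, d, ‖g‖ and ‖u_d‖ but not on n, such that |(s̄_n,ᾱ_n) − (s̄,ᾱ)| ≤ (C/κ) (n/2)^{−ω} max{|g|_ω, |u_d|_ω} for all even n ≥ 2. -/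

import Mathlib

open scoped BigOperators
open Filter

noncomputable section

/-- Index set `ℤ^d \ {0}` of nonzero frequencies. -/
abbrev K (d : ℕ) : Type := {k : Fin d → ℤ // k ≠ 0}

/-- Euclidean norm `|k|` of a frequency `k ∈ ℤ^d \ {0}`. -/
noncomputable def nrm {d : ℕ} (k : K d) : ℝ := Real.sqrt (∑ i : Fin d, ((k.1 i : ℝ)) ^ 2)

/-- Squared fractional Sobolev seminorm `|u|_s² = Σ_k |k|^{2s} |u_k|²`. -/
noncomputable def HnormSq {d : ℕ} (s : ℝ) (u : K d → ℂ) : ℝ :=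
  ∑' k : K d, nrm k ^ (2 * s) * ‖u k‖ ^ 2

/-- `u ∈ ℓ²`, i.e. `‖u‖ = |u|_0 < ∞`. -/
def MemL2 {d : ℕ} (u : K d → ℂ) : Prop := Summable fun k : K d => ‖u k‖ ^ 2

/-- `|u|_s < ∞`. -/
def MemHs {d : ℕ} (s : ℝ) (u : K d → ℂ) : Prop :=
  Summable fun k : K d => nrm k ^ (2 * s) * ‖u k‖ ^ 2

/-- Membership `k ∈ ℤ_n^d`, i.e. `−n/2 ≤ k_i ≤ n/2 − 1` for all `i`. -/
def inZn {d : ℕ} (n : ℕ) (k : K d) : Prop :=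
  ∀ i : Fin d, -((n : ℤ) / 2) ≤ k.1 i ∧ k.1 i ≤ (n : ℤ) / 2 - 1

instance {d : ℕ} (n : ℕ) (k : K d) : Decidable (inZn n k) := by
  unfold inZn; infer_instance

/-- Truncation `P_n v` of a sequence to the modes in `ℤ_n^d ∖ {0}`. -/
def trunc {d : ℕ} (n : ℕ) (v : K d → ℂ) : K d → ℂ :=
  fun k => if inZn n k then v k else 0

/-!
With `c = (2(2π)^d)⁻¹`, the reduced functionals satisfy `j_n = j − c τ_n`, where `τ_n` is the sum
over the modes `k ∉ ℤ_n^d` of `|S_g(s,α)_k − u_{d,k}|²` (the regularizer `φ` cancels). Both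
gradients vanish at the respective minimizers, so strong convexity of `j` gives
`κ |p_n − p̄|² ≤ ⟨∇j(p_n) − ∇j(p̄), p_n − p̄⟩ = c ⟨∇τ_n(p_n), p_n − p̄⟩`, i.e.
`κ |p_n − p̄| ≤ c |∇τ_n(p_n)|`. On `W°` the gradient of the `k`-th mode is
`O(|g_k|² + |u_{d,k}|²)`, and every `k ∉ ℤ_n^d` has `|k| ≥ n/2`, so
`|∇τ_n| = O((n/2)^{−2ω} (|g|_ω² + |u_d|_ω²)) = O((n/2)^{−ω} max(|g|_ω, |u_d|_ω))`.
-/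

section StrongConvexity

variable {E : Type*} [NormedAddCommGroup E] [NormedSpace ℝ E] {f : E → ℝ} {W : Set E} {κ : ℝ}

theorem Convex.mul_norm_sq_le_fderiv_sub (hW : Convex ℝ W) (hκ : 0 < κ)
    (hf : ∀ x ∈ W, ∀ v, κ * ‖v‖ ^ 2 ≤ fderiv ℝ (fderiv ℝ f) x v v)
    {p q : E} (hp : p ∈ W) (hq : q ∈ W) :
    κ * ‖q - p‖ ^ 2 ≤ fderiv ℝ f q (q - p) - fderiv ℝ f p (q - p) := by
  set v := q - p
  rcases eq_or_ne v 0 with hv | hv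
  · simp [hv]
  have hseg : ∀ t ∈ Set.Icc (0 : ℝ) 1, p + t • v ∈ W := fun t ht => by
    convert hW hp hq (by linarith [ht.2] : (0 : ℝ) ≤ 1 - t) ht.1 (by ring) using 1
    simp only [v, smul_sub, sub_smul, one_smul]
    abel
  -- the Hessian bound forces `fderiv ℝ (fderiv ℝ f) x ≠ 0`, hence differentiability of `fderiv`
  have hdiff : ∀ x ∈ W, DifferentiableAt ℝ (fderiv ℝ f) x := fun x hx => by
    by_contra hnd
    have := hf x hx v
    rw [fderiv_zero_of_not_differentiableAt hnd] at this
    simp only [zero_apply] at this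
    exact (by positivity : 0 < κ * ‖v‖ ^ 2).not_ge this
  set ψ : ℝ → ℝ := fun t => fderiv ℝ f (p + t • v) v
  have hψ : ∀ t ∈ Set.Icc (0 : ℝ) 1, HasDerivAt ψ (fderiv ℝ (fderiv ℝ f) (p + t • v) v v) t :=
    fun t ht => by
      have hline : HasDerivAt (fun s : ℝ => p + s • v) v t := by
        simpa using ((hasDerivAt_id t).smul_const v).const_add p
      exact (ContinuousLinearMap.apply ℝ ℝ v).hasFDerivAt.comp_hasDerivAt t
        ((hdiff _ (hseg t ht)).hasFDerivAt.comp_hasDerivAt t hline)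
  have hmvt := Convex.mul_sub_le_image_sub_of_le_deriv (convex_Icc (0 : ℝ) 1)
    (fun t ht => (hψ t ht).continuousAt.continuousWithinAt)
    (fun t ht => (hψ t (interior_subset ht)).differentiableAt.differentiableWithinAt)
    (fun t ht => (hψ t (interior_subset ht)).deriv ▸ hf _ (hseg t (interior_subset ht)) v)
    0 (by simp) 1 (by simp) zero_le_one
  simpa [ψ, v] using hmvt

theorem IsOpen.mul_norm_sub_le_of_isMinOn (hWo : IsOpen W) (hWc : Convex ℝ W) (hκ : 0 < κ)
    (hf : ∀ x ∈ W, ∀ v, κ * ‖v‖ ^ 2 ≤ iteratedFDerivWithin ℝ 2 f W x ![v, v])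
    {g h : E → ℝ} (hgf : ∀ x ∈ W, g x = f x + h x) {p q : E} (hp : p ∈ W) (hq : q ∈ W)
    (hfp : IsMinOn f W p) (hgq : IsMinOn g W q) {h' : E →L[ℝ] ℝ} (hh : HasFDerivAt h h' q) :
    κ * ‖q - p‖ ≤ ‖h'‖ := by
  have hf' : ∀ x ∈ W, ∀ v, κ * ‖v‖ ^ 2 ≤ fderiv ℝ (fderiv ℝ f) x v v := fun x hx v => by
    simpa [iteratedFDerivWithin_of_isOpen 2 hWo hx, iteratedFDeriv_two_apply] using hf x hx v
  have hmono := hWc.mul_norm_sq_le_fderiv_sub hκ hf' hp hq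
  rw [(hfp.isLocalMin (hWo.mem_nhds hp)).fderiv_eq_zero] at hmono
  have hgrad : fderiv ℝ f q (q - p) ≤ ‖h'‖ * ‖q - p‖ := by
    by_cases hd : DifferentiableAt ℝ f q
    · have hg : HasFDerivAt g (fderiv ℝ f q + h') q :=
        (hd.hasFDerivAt.add hh).congr_of_eventuallyEq
          (Filter.eventually_of_mem (hWo.mem_nhds hq) hgf)
      have := congr($((hgq.isLocalMin (hWo.mem_nhds hq)).hasFDerivAt_eq_zero hg) (q - p))
      simp only [add_apply, zero_apply] at this
      have hb : |h' (q - p)| ≤ ‖h'‖ * ‖q - p‖ := h'.le_opNorm (q - p)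
      linarith [neg_abs_le (h' (q - p))]
    · rw [fderiv_zero_of_not_differentiableAt hd]
      simp only [zero_apply]
      positivity
  rcases (norm_nonneg (q - p)).eq_or_lt' with h0 | hpos
  · simp [h0]
  · simp only [zero_apply, sub_zero] at hmono
    nlinarith

end StrongConvexity

theorem exists_hasFDerivAt_tsum_norm_le {α E F : Type*} [NormedAddCommGroup E] [NormedSpace ℝ E]
    [NormedAddCommGroup F] [NormedSpace ℝ F] [CompleteSpace F] {f : α → E → F} {u : α → ℝ}
    {s : Set E} {x₀ x : E} (hu : Summable u) (hs : IsOpen s) (h's : IsPreconnected s)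
    (hf : ∀ n, ∀ y ∈ s, DifferentiableAt ℝ (f n) y ∧ ‖fderiv ℝ (f n) y‖ ≤ u n)
    (hx₀ : x₀ ∈ s) (hf0 : Summable (f · x₀)) (hx : x ∈ s) :
    ∃ L : E →L[ℝ] F, HasFDerivAt (fun y => ∑' n, f n y) L x ∧ ‖L‖ ≤ ∑' n, u n :=
  ⟨_, hasFDerivAt_tsum_of_isPreconnected hu hs h's (fun n y hy => (hf n y hy).1.hasFDerivAt)
    (fun n y hy => (hf n y hy).2) hx₀ hf0 hx,
    tsum_of_norm_bounded hu.hasSum fun n => (hf n x hx).2⟩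

theorem add_le_two_mul_max_sqrt_sq (x y : ℝ) : x + y ≤ 2 * max √x √y ^ 2 := by
  have hx := (Real.sqrt_le_iff.mp (le_max_left √x √y)).2
  have hy := (Real.sqrt_le_iff.mp (le_max_right √x √y)).2
  linarith

theorem nrm_nonneg {d : ℕ} (k : K d) : 0 ≤ nrm k := Real.sqrt_nonneg _

theorem abs_le_nrm {d : ℕ} (k : K d) (i : Fin d) : |(k.1 i : ℝ)| ≤ nrm k := by
  rw [← Real.sqrt_sq_eq_abs]
  exact Real.sqrt_le_sqrt
    (Finset.single_le_sum (f := fun j => (k.1 j : ℝ) ^ 2) (fun _ _ => sq_nonneg _)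
      (Finset.mem_univ i))

theorem one_le_nrm {d : ℕ} (k : K d) : 1 ≤ nrm k := by
  obtain ⟨i, hi⟩ := Function.ne_iff.mp k.2
  have : (1 : ℝ) ≤ |(k.1 i : ℝ)| := by exact_mod_cast Int.one_le_abs hi
  exact this.trans (abs_le_nrm k i)

theorem half_le_nrm_of_not_inZn {d n : ℕ} (hn : Even n) {k : K d} (hk : ¬ inZn n k) :
    (n : ℝ) / 2 ≤ nrm k := by
  obtain ⟨r, rfl⟩ := hn
  simp only [inZn, not_forall, not_and_or, not_le] at hk
  obtain ⟨i, hi⟩ := hk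
  have hr : (((r + r : ℕ) : ℤ)) / 2 = r := by omega
  have : (r : ℤ) ≤ |k.1 i| := by rw [hr] at hi; cases abs_cases (k.1 i) <;> omega
  have : (r : ℝ) ≤ |(k.1 i : ℝ)| := by exact_mod_cast this
  push_cast
  linarith [abs_le_nrm k i]

theorem MemHs.of_le {d : ℕ} {s t : ℝ} {u : K d → ℂ} (hst : s ≤ t) (hu : MemHs t u) :
    MemHs s u :=
  hu.of_nonneg_of_le
    (fun k => mul_nonneg (Real.rpow_nonneg (nrm_nonneg k) _) (by positivity)) fun k =>
    mul_le_mul_of_nonneg_right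
      (Real.rpow_le_rpow_of_exponent_le (one_le_nrm k) (by linarith)) (by positivity)

theorem HnormSq_nonneg {d : ℕ} (s : ℝ) (u : K d → ℂ) : 0 ≤ HnormSq s u :=
  tsum_nonneg fun k => mul_nonneg (Real.rpow_nonneg (nrm_nonneg k) _) (by positivity)

theorem tsum_not_inZn_le {d n : ℕ} (hn : Even n) (hn0 : 0 < n) {ω : ℝ} (hω : 0 ≤ ω)
    {w : K d → ℝ} (hw : ∀ k, 0 ≤ w k) (hsum : Summable fun k => nrm k ^ (2 * ω) * w k) :
    ∑' k, (if inZn n k then 0 else w k)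
      ≤ ((n : ℝ) / 2) ^ (-(2 * ω)) * ∑' k, nrm k ^ (2 * ω) * w k := by
  have hm : (0 : ℝ) < n / 2 := by positivity
  have hle : ∀ k, (if inZn n k then 0 else w k)
      ≤ ((n : ℝ) / 2) ^ (-(2 * ω)) * (nrm k ^ (2 * ω) * w k) := by
    intro k
    split_ifs with hk
    · exact mul_nonneg (by positivity) (mul_nonneg (Real.rpow_nonneg (nrm_nonneg k) _) (hw k))
    · have hpow : ((n : ℝ) / 2) ^ (2 * ω) ≤ nrm k ^ (2 * ω) :=
        Real.rpow_le_rpow hm.le (half_le_nrm_of_not_inZn hn hk) (by linarith)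
      rw [Real.rpow_neg hm.le, ← mul_assoc, ← div_eq_inv_mul]
      exact le_mul_of_one_le_left (hw k) ((one_le_div (by positivity)).mpr hpow)
  have htail : Summable fun k => if inZn n k then 0 else w k :=
    (hsum.mul_left _).of_nonneg_of_le (fun k => by split_ifs <;> simp [hw]) hle
  rw [← tsum_mul_left]
  exact htail.tsum_le_tsum hle (hsum.mul_left _)

/-- `S_h(s,α)_k = filterFactor |k| (s,α) • h_k`. -/
def filterFactor (ν : ℝ) (q : ℝ × ℝ) : ℝ := q.2 / (q.2 + ν ^ (2 * q.1))

theorem filterFactor_mem_Icc {ν : ℝ} (hν : 0 ≤ ν) {q : ℝ × ℝ} (hq : 0 < q.2) :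
    filterFactor ν q ∈ Set.Icc 0 1 := by
  have : 0 ≤ ν ^ (2 * q.1) := Real.rpow_nonneg hν _
  exact ⟨by unfold filterFactor; positivity, (div_le_one (by positivity)).mpr (by linarith)⟩

theorem hasFDerivAt_filterFactor {ν : ℝ} (hν : 0 < ν) {q : ℝ × ℝ} (hq : 0 < q.2) :
    HasFDerivAt (filterFactor ν)
      ((ν ^ (2 * q.1) / (q.2 + ν ^ (2 * q.1)) ^ 2) • ContinuousLinearMap.snd ℝ ℝ ℝ
        - (2 * Real.log ν * ν ^ (2 * q.1) * q.2 / (q.2 + ν ^ (2 * q.1)) ^ 2) •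
          ContinuousLinearMap.fst ℝ ℝ ℝ) q := by
  have hE : 0 < ν ^ (2 * q.1) := Real.rpow_pos_of_pos hν _
  have hD : q.2 + ν ^ (2 * q.1) ≠ 0 := by positivity
  have hfst : HasFDerivAt (fun p : ℝ × ℝ => 2 * p.1) _ q :=
    (hasFDerivAt_fst (𝕜 := ℝ) (p := q)).const_mul 2
  have hden := (hasFDerivAt_snd (p := q)).add (hfst.const_rpow hν)
  have h : HasFDerivAt (fun p : ℝ × ℝ => p.2 * (p.2 + ν ^ (2 * p.1))⁻¹) _ q :=
    (hasFDerivAt_snd (p := q)).mul ((hasDerivAt_inv hD).comp_hasFDerivAt q hden)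
  rw [show filterFactor ν = fun p : ℝ × ℝ => p.2 * (p.2 + ν ^ (2 * p.1))⁻¹ from rfl]
  refine h.congr_fderiv ?_
  ext <;> simp <;> field_simp; ring

theorem norm_fderiv_filterFactor_le {ν s₀ α₀ α₁ : ℝ} (hν : 1 ≤ ν) (hs₀ : 0 < s₀) (hα₀ : 0 < α₀)
    {q : ℝ × ℝ} (hs : s₀ ≤ q.1) (hα : α₀ ≤ q.2) (hα₁ : q.2 ≤ α₁) :
    ‖fderiv ℝ (filterFactor ν) q‖ ≤ 1 / α₀ + α₁ / s₀ := by
  have hq : 0 < q.2 := hα₀.trans_le hα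
  rw [(hasFDerivAt_filterFactor (by linarith) hq).fderiv]
  set E := ν ^ (2 * q.1)
  set D := q.2 + E
  have hE : 0 < E := Real.rpow_pos_of_pos (by linarith) _
  have hL : 0 ≤ Real.log ν := Real.log_nonneg hν
  -- `2 s log ν ≤ exp (2 s log ν) = ν ^ (2 s)`
  have hlog : 2 * Real.log ν * s₀ ≤ E := by
    have := Real.add_one_le_exp (Real.log ν * (2 * q.1))
    rw [← Real.rpow_def_of_pos (by linarith)] at this
    nlinarith
  have h1 : E / D ^ 2 ≤ 1 / α₀ := by
    rw [div_le_div_iff₀ (by positivity) hα₀]; nlinarith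
  have h2 : 2 * Real.log ν * E * q.2 / D ^ 2 ≤ α₁ / s₀ := by
    rw [div_le_div_iff₀ (by positivity) hs₀]
    have hED : E * E ≤ D ^ 2 := by nlinarith [show E ≤ D by simp only [D]; linarith]
    have : E * E * q.2 ≤ D ^ 2 * α₁ := mul_le_mul hED hα₁ hq.le (sq_nonneg _)
    nlinarith [mul_le_mul_of_nonneg_right hlog (by positivity : 0 ≤ E * q.2)]
  calc _ ≤ ‖(E / D ^ 2) • ContinuousLinearMap.snd ℝ ℝ ℝ‖
        + ‖(2 * Real.log ν * E * q.2 / D ^ 2) • ContinuousLinearMap.fst ℝ ℝ ℝ‖ := norm_sub_le _ _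
    _ ≤ E / D ^ 2 * 1 + 2 * Real.log ν * E * q.2 / D ^ 2 * 1 := by
        rw [norm_smul, norm_smul, Real.norm_of_nonneg (by positivity),
          Real.norm_of_nonneg (by positivity)]
        gcongr
        exacts [ContinuousLinearMap.norm_snd_le .., ContinuousLinearMap.norm_fst_le ..]
    _ ≤ 1 / α₀ + α₁ / s₀ := by linarith

def residualSq (ν : ℝ) (a b : ℂ) (q : ℝ × ℝ) : ℝ := ‖filterFactor ν q • a - b‖ ^ 2

theorem norm_filterFactor_smul_sub_le {ν : ℝ} (hν : 0 ≤ ν) {q : ℝ × ℝ} (hq : 0 < q.2) (a b : ℂ) :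
    ‖filterFactor ν q • a - b‖ ≤ ‖a‖ + ‖b‖ := by
  obtain ⟨h0, h1⟩ := filterFactor_mem_Icc hν hq
  calc _ ≤ ‖filterFactor ν q • a‖ + ‖b‖ := norm_sub_le _ _
    _ ≤ ‖a‖ + ‖b‖ := by
        rw [norm_smul, Real.norm_of_nonneg h0]
        gcongr
        exact mul_le_of_le_one_left (norm_nonneg a) h1

theorem residualSq_le {ν : ℝ} (hν : 0 ≤ ν) {q : ℝ × ℝ} (hq : 0 < q.2) (a b : ℂ) :
    residualSq ν a b q ≤ 2 * (‖a‖ ^ 2 + ‖b‖ ^ 2) := by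
  have := norm_filterFactor_smul_sub_le hν hq a b
  unfold residualSq
  nlinarith [norm_nonneg (filterFactor ν q • a - b), sq_nonneg (‖a‖ - ‖b‖)]

theorem differentiableAt_residualSq_and_norm_fderiv_le {ν s₀ α₀ α₁ : ℝ} (hν : 1 ≤ ν)
    (hs₀ : 0 < s₀) (hα₀ : 0 < α₀) (a b : ℂ) {q : ℝ × ℝ} (hs : s₀ ≤ q.1) (hα : α₀ ≤ q.2)
    (hα₁ : q.2 ≤ α₁) :
    DifferentiableAt ℝ (residualSq ν a b) q ∧
      ‖fderiv ℝ (residualSq ν a b) q‖ ≤ 3 * (1 / α₀ + α₁ / s₀) * (‖a‖ ^ 2 + ‖b‖ ^ 2) := by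
  have hq : 0 < q.2 := hα₀.trans_le hα
  have hR := (hasFDerivAt_filterFactor (ν := ν) (by linarith) hq).differentiableAt.hasFDerivAt
  have h : HasFDerivAt (residualSq ν a b) _ q := ((hR.smul_const a).sub_const b).norm_sq
  refine ⟨h.differentiableAt, ?_⟩
  rw [h.fderiv]
  have hz := norm_filterFactor_smul_sub_le (ν := ν) (by linarith) hq a b
  have hR' := norm_fderiv_filterFactor_le hν hs₀ hα₀ hs hα hα₁
  have hM : 0 ≤ 1 / α₀ + α₁ / s₀ := (norm_nonneg _).trans hR'
  set z := filterFactor ν q • a - b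
  set R := fderiv ℝ (filterFactor ν) q
  calc _ ≤ 2 * ‖(innerSL ℝ z).comp (R.smulRight a)‖ := by
        simpa using norm_nsmul_le (n := 2) (a := (innerSL ℝ z).comp (R.smulRight a))
    _ ≤ 2 * (‖innerSL ℝ z‖ * ‖R.smulRight a‖) := by
        gcongr
        exact ContinuousLinearMap.opNorm_comp_le _ _
    _ = 2 * (‖z‖ * (‖R‖ * ‖a‖)) := by
        rw [innerSL_apply_norm, ContinuousLinearMap.norm_smulRight_apply]
    _ ≤ 2 * ((‖a‖ + ‖b‖) * ((1 / α₀ + α₁ / s₀) * ‖a‖)) := by gcongr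
    _ ≤ 3 * (1 / α₀ + α₁ / s₀) * (‖a‖ ^ 2 + ‖b‖ ^ 2) := by
        nlinarith [mul_nonneg hM (sq_nonneg (‖a‖ - ‖b‖)), mul_nonneg hM (sq_nonneg ‖a‖)]

theorem norm_div_sub_sq_eq_residualSq (ν : ℝ) (a b : ℂ) (q : ℝ × ℝ) :
    ‖(q.2 : ℂ) * a / ((q.2 + ν ^ (2 * q.1) : ℝ) : ℂ) - b‖ ^ 2 = residualSq ν a b q := by
  rw [residualSq, filterFactor, Complex.real_smul, Complex.ofReal_div, div_mul_eq_mul_div]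

theorem residualSq_trunc {d : ℕ} (n : ℕ) (g ud : K d → ℂ) (k : K d) (q : ℝ × ℝ) :
    residualSq (nrm k) (trunc n g k) (trunc n ud k) q
      = if inZn n k then residualSq (nrm k) (g k) (ud k) q else 0 := by
  unfold trunc
  split_ifs <;> simp [residualSq]

section Residuals

variable {d : ℕ} {g ud : K d → ℂ}

theorem summable_residualSq (hg : MemL2 g) (hud : MemL2 ud) {q : ℝ × ℝ} (hq : 0 < q.2) :
    Summable fun k => residualSq (nrm k) (g k) (ud k) q :=
  ((hg.add hud).mul_left 2).of_nonneg_of_le (fun _ => by unfold residualSq; positivity)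
    fun k => residualSq_le (nrm_nonneg k) hq _ _

theorem tsum_residualSq_trunc (hg : MemL2 g) (hud : MemL2 ud) (n : ℕ) {q : ℝ × ℝ}
    (hq : 0 < q.2) :
    ∑' k, residualSq (nrm k) (trunc n g k) (trunc n ud k) q
      = ∑' k, residualSq (nrm k) (g k) (ud k) q
        - ∑' k, (if inZn n k then 0 else residualSq (nrm k) (g k) (ud k) q) := by
  have hsum := summable_residualSq hg hud hq
  have htail : Summable fun k => if inZn n k then 0 else residualSq (nrm k) (g k) (ud k) q :=
    hsum.of_nonneg_of_le (fun _ => by split_ifs <;> simp [residualSq])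
      fun _ => by split_ifs <;> simp [residualSq]
  rw [← hsum.tsum_sub htail]
  congr 1; funext k
  rw [residualSq_trunc]
  split_ifs <;> simp

theorem exists_hasFDerivAt_tsum_residualSq_tail {s₀ s₁ α₀ α₁ : ℝ} (hs₀ : 0 < s₀) (hα₀ : 0 < α₀)
    (hg : MemL2 g) (hud : MemL2 ud) {ω : ℝ} (hω : 0 ≤ ω) (hgω : MemHs ω g)
    (hudω : MemHs ω ud) {n : ℕ} (hn : Even n) (hn0 : 0 < n) {p : ℝ × ℝ}
    (hp : p ∈ Set.Ioo s₀ s₁ ×ˢ Set.Ioo α₀ α₁) :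
    ∃ L : ℝ × ℝ →L[ℝ] ℝ,
      HasFDerivAt (fun q => ∑' k, if inZn n k then 0 else residualSq (nrm k) (g k) (ud k) q)
        L p ∧
      ‖L‖ ≤ 3 * (1 / α₀ + α₁ / s₀) *
        (((n : ℝ) / 2) ^ (-(2 * ω)) * (HnormSq ω g + HnormSq ω ud)) := by
  set w : K d → ℝ := fun k => ‖g k‖ ^ 2 + ‖ud k‖ ^ 2
  have hw : ∀ k, 0 ≤ w k := fun k => by positivity
  have htail_le : ∀ k, (if inZn n k then 0 else w k) ≤ w k := fun k => by
    split_ifs <;> simp [hw]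
  have htail : Summable fun k => if inZn n k then 0 else w k :=
    (hg.add hud).of_nonneg_of_le (fun k => by split_ifs <;> simp [hw]) htail_le
  have hWo : IsOpen (Set.Ioo s₀ s₁ ×ˢ Set.Ioo α₀ α₁) := isOpen_Ioo.prod isOpen_Ioo
  have hWc : Convex ℝ (Set.Ioo s₀ s₁ ×ˢ Set.Ioo α₀ α₁) := (convex_Ioo _ _).prod (convex_Ioo _ _)
  have hF : ∀ k, ∀ y ∈ Set.Ioo s₀ s₁ ×ˢ Set.Ioo α₀ α₁,
      DifferentiableAt ℝ (fun q => if inZn n k then 0 else residualSq (nrm k) (g k) (ud k) q) y ∧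
      ‖fderiv ℝ (fun q => if inZn n k then 0 else residualSq (nrm k) (g k) (ud k) q) y‖
        ≤ 3 * (1 / α₀ + α₁ / s₀) * (if inZn n k then 0 else w k) := fun k y hy => by
    by_cases hk : inZn n k
    · simp [hk]
    · simpa [hk, w] using differentiableAt_residualSq_and_norm_fderiv_le (one_le_nrm k) hs₀ hα₀
        (g k) (ud k) hy.1.1.le hy.2.1.le hy.2.2.le
  obtain ⟨L, hL, hLle⟩ := exists_hasFDerivAt_tsum_norm_le
    (f := fun k q => if inZn n k then 0 else residualSq (nrm k) (g k) (ud k) q)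
    (u := fun k => 3 * (1 / α₀ + α₁ / s₀) * (if inZn n k then 0 else w k))
    (htail.mul_left _) hWo hWc.isPreconnected hF hp
    ((summable_residualSq hg hud (hα₀.trans hp.2.1)).of_nonneg_of_le
      (fun k => by split_ifs <;> simp [residualSq]) fun k => by split_ifs <;> simp [residualSq])
    hp
  refine ⟨L, hL, hLle.trans ?_⟩
  have hsummable : Summable fun k => nrm k ^ (2 * ω) * w k := by
    simpa only [w, mul_add] using hgω.add hudω
  have hsum : ∑' k, nrm k ^ (2 * ω) * w k = HnormSq ω g + HnormSq ω ud := by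
    simp only [w, mul_add]
    exact hgω.tsum_add hudω
  rw [tsum_mul_left, ← hsum]
  have hα₁ : 0 < α₁ := hα₀.trans (hp.2.1.trans hp.2.2)
  gcongr
  exact tsum_not_inZn_le hn hn0 hω hw hsummable

end Residuals

theorem stmt_11_general (d : ℕ)
    (s₀ s₁ α₀ α₁ : ℝ) (hs₀ : 0 < s₀) (hα₀ : 0 < α₀) (hα : α₀ < α₁)
    (W : Set (ℝ × ℝ)) (hW : W = Set.Ioo s₀ s₁ ×ˢ Set.Ioo α₀ α₁)
    (g ud : K d → ℂ) (hg2 : MemL2 g) (hud2 : MemL2 ud)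
    (s₂ s₃ : ℝ) (hs₂ : 0 < s₂) (hs₃ : 0 < s₃)
    (ω : ℝ) (hω : ω = min s₂ s₃)
    (hg : MemHs s₂ g) (hud : MemHs s₃ ud)
    (φ : ℝ × ℝ → ℝ)
    (j : ℝ × ℝ → ℝ) (jn : ℕ → ℝ × ℝ → ℝ)
    (hj : ∀ p : ℝ × ℝ, j p = (1 / (2 * (2 * Real.pi) ^ d)) *
        (∑' k : K d, ‖(p.2 : ℂ) * g k / ((p.2 + nrm k ^ (2 * p.1) : ℝ) : ℂ) - ud k‖ ^ 2)
      + φ p)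
    (hjn : ∀ n : ℕ, ∀ p : ℝ × ℝ, jn n p = (1 / (2 * (2 * Real.pi) ^ d)) *
        (∑' k : K d,
          ‖(p.2 : ℂ) * trunc n g k / ((p.2 + nrm k ^ (2 * p.1) : ℝ) : ℂ) - trunc n ud k‖ ^ 2)
      + φ p)
    (κ : ℝ) (hκ : 0 < κ)
    (hhess : ∀ p ∈ W, ∀ v : ℝ × ℝ,
      κ * ‖v‖ ^ 2 ≤ iteratedFDerivWithin ℝ 2 j W p ![v, v])
    (pbar : ℝ × ℝ) (hpbar : pbar ∈ W) (hminbar : ∀ q ∈ W, j pbar ≤ j q)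
    (pn : ℕ → ℝ × ℝ)
    (hpn : ∀ n : ℕ, Even n → pn n ∈ W ∧ ∀ q ∈ W, jn n (pn n) ≤ jn n q) :
    ∃ C : ℝ, 0 < C ∧ ∀ n : ℕ, Even n → 2 ≤ n →
      ‖pn n - pbar‖ ≤ C / κ * ((n : ℝ) / 2) ^ (-ω) *
        max (Real.sqrt (HnormSq ω g)) (Real.sqrt (HnormSq ω ud)) := by
  subst hW
  have hωpos : 0 < ω := hω ▸ lt_min hs₂ hs₃
  set c : ℝ := 1 / (2 * (2 * Real.pi) ^ d)
  set M : ℝ := 1 / α₀ + α₁ / s₀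
  set T := max (√(HnormSq ω g)) (√(HnormSq ω ud))
  have hα₁ : 0 < α₁ := hα₀.trans hα
  have hT : HnormSq ω g + HnormSq ω ud ≤ 2 * T ^ 2 := add_le_two_mul_max_sqrt_sq _ _
  refine ⟨6 * c * M * T + 1, by positivity, fun n hn hn2 => ?_⟩
  obtain ⟨hpnW, hpnmin⟩ := hpn n hn
  obtain ⟨L, hL, hLle⟩ := exists_hasFDerivAt_tsum_residualSq_tail hs₀ hα₀ hg2 hud2 hωpos.le
    (hg.of_le (hω ▸ min_le_left _ _)) (hud.of_le (hω ▸ min_le_right _ _)) hn (by omega) hpnW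
  have hsplit : ∀ q ∈ Set.Ioo s₀ s₁ ×ˢ Set.Ioo α₀ α₁, jn n q = j q + -c *
      ∑' k, (if inZn n k then 0 else residualSq (nrm k) (g k) (ud k) q) := fun q hq => by
    simp only [hjn, hj, norm_div_sub_sq_eq_residualSq,
      tsum_residualSq_trunc hg2 hud2 n (hα₀.trans hq.2.1)]
    ring
  have key := (isOpen_Ioo.prod isOpen_Ioo).mul_norm_sub_le_of_isMinOn
    ((convex_Ioo _ _).prod (convex_Ioo _ _)) hκ hhess hsplit hpbar hpnW
    (isMinOn_iff.mpr hminbar) (isMinOn_iff.mpr hpnmin) (hL.const_mul (-c))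
  set m : ℝ := (n : ℝ) / 2
  have hm : 1 ≤ m := by simp only [m]; rw [le_div_iff₀ two_pos]; exact_mod_cast hn2
  have hmω : m ^ (-(2 * ω)) ≤ m ^ (-ω) := Real.rpow_le_rpow_of_exponent_le hm (by linarith)
  have hH := add_nonneg (HnormSq_nonneg ω g) (HnormSq_nonneg ω ud)
  rw [div_mul_eq_mul_div, div_mul_eq_mul_div, le_div_iff₀ hκ]
  calc ‖pn n - pbar‖ * κ ≤ c * ‖L‖ := by
        rwa [neg_smul, norm_neg, norm_smul, Real.norm_of_nonneg (by positivity), mul_comm] at key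
    _ ≤ c * (3 * M * (m ^ (-(2 * ω)) * (HnormSq ω g + HnormSq ω ud))) := by gcongr
    _ ≤ c * (3 * M * (m ^ (-ω) * (2 * T ^ 2))) := by gcongr
    _ = 6 * c * M * T * m ^ (-ω) * T := by ring
    _ ≤ (6 * c * M * T + 1) * m ^ (-ω) * T := by gcongr; linarith

/-- convergence of the spectral approximation of the bilevel problem.
Under the stated regularity of the data `g, u_d`, strong convexity of `φ` and of the reduced
functionals `j`, `j_n` (Hessians `⪰ κ·Id` on `W°`), the minimizers satisfy
`|(s̄_n,ᾱ_n) − (s̄,ᾱ)| ≤ (C/κ)(n/2)^{−ω} max{|g|_ω, |u_d|_ω}` for all even `n ≥ 2`,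
with `C` independent of `n`. -/
theorem stmt_11 (d : ℕ) (hd : 1 ≤ d)
    (s₀ s₁ α₀ α₁ : ℝ) (hs₀ : 0 < s₀) (hs : s₀ < s₁) (hα₀ : 0 < α₀) (hα : α₀ < α₁)
    (W : Set (ℝ × ℝ)) (hW : W = Set.Ioo s₀ s₁ ×ˢ Set.Ioo α₀ α₁)
    (g ud : K d → ℂ) (hg2 : MemL2 g) (hud2 : MemL2 ud)
    (s₂ s₃ : ℝ) (hs₂ : 0 < s₂) (hs₃ : 0 < s₃)
    (ω : ℝ) (hω : ω = min s₂ s₃)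
    (hg : MemHs s₂ g) (hud : MemHs s₃ ud)
    (φ : ℝ × ℝ → ℝ) (hφC2 : ContDiffOn ℝ 2 φ W) (hφ0 : ∀ p ∈ W, 0 ≤ φ p)
    (θ : ℝ) (hθ : 0 < θ)
    (hφsc : ∀ p ∈ W, ∀ v : ℝ × ℝ,
      θ * ‖v‖ ^ 2 ≤ iteratedFDerivWithin ℝ 2 φ W p ![v, v])
    (hφblow : ∀ p ∈ frontier W, Tendsto φ (nhdsWithin p W) atTop)
    (j : ℝ × ℝ → ℝ) (jn : ℕ → ℝ × ℝ → ℝ)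
    (hj : ∀ p : ℝ × ℝ, j p = (1 / (2 * (2 * Real.pi) ^ d)) *
        (∑' k : K d, ‖(p.2 : ℂ) * g k / ((p.2 + nrm k ^ (2 * p.1) : ℝ) : ℂ) - ud k‖ ^ 2)
      + φ p)
    (hjn : ∀ n : ℕ, ∀ p : ℝ × ℝ, jn n p = (1 / (2 * (2 * Real.pi) ^ d)) *
        (∑' k : K d,
          ‖(p.2 : ℂ) * trunc n g k / ((p.2 + nrm k ^ (2 * p.1) : ℝ) : ℂ) - trunc n ud k‖ ^ 2)
      + φ p)
    (κ : ℝ) (hκ : 0 < κ)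
    (hhess : ∀ p ∈ W, ∀ v : ℝ × ℝ,
      κ * ‖v‖ ^ 2 ≤ iteratedFDerivWithin ℝ 2 j W p ![v, v])
    (hhessn : ∀ n : ℕ, Even n → ∀ p ∈ W, ∀ v : ℝ × ℝ,
      κ * ‖v‖ ^ 2 ≤ iteratedFDerivWithin ℝ 2 (jn n) W p ![v, v])
    (pbar : ℝ × ℝ) (hpbar : pbar ∈ W) (hminbar : ∀ q ∈ W, j pbar ≤ j q)
    (pn : ℕ → ℝ × ℝ)
    (hpn : ∀ n : ℕ, Even n → pn n ∈ W ∧ ∀ q ∈ W, jn n (pn n) ≤ jn n q) :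
    ∃ C : ℝ, 0 < C ∧ ∀ n : ℕ, Even n → 2 ≤ n →
      ‖pn n - pbar‖ ≤ C / κ * ((n : ℝ) / 2) ^ (-ω) *
        max (Real.sqrt (HnormSq ω g)) (Real.sqrt (HnormSq ω ud)) :=
  stmt_11_general d s₀ s₁ α₀ α₁ hs₀ hα₀ hα W hW g ud hg2 hud2 s₂ s₃ hs₂ hs₃ ω hω hg hud φ j jn hj
    hjn κ hκ hhess pbar hpbar hminbar pn hpn
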